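/- arXiv:0801.3964 — 2 statements merged into one kernel-verified Lean document; each statement's English description precedes it below -/
import Mathlib

section
/- For all integers m, n > 0 and 0 < j < n with m > n − j, the generalized Chebyshev polynomials satisfy the multiplication identity P_m(t_j, ..., t_{j+m-1}) · P_n(t_0, ..., t_{n-1}) = P_{m+j}(t_0, ..., t_{m+j-1}) · P_{n-j}(t_j, ..., t_{n-1}) + P_{j-1}(t_0, ..., t_{j-2}) · P_{m+j-n-1}(t_{n+1}, ..., t_{m+j-1}), as an identity in ℤ[t_0, ..., t_{m+j-1}]. -/
/-!
Both sides of the identity, viewed as functions of `m`, satisfy the three-term recurrence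
`f(m + 1) = t_{m+j} f(m) - f(m - 1)` with the same coefficient `t_{m+j}`, so it suffices to check
the two smallest admissible values of `m`. For `m = n - j + 1` the identity is a Casoratian
(discrete Wronskian) identity, itself proved by induction on `n - j` along the same recurrence;
for `m = n - j + 2` it is `t_{n+1}` times the Casoratian identity.
-/

open MvPolynomial Polynomial

/-- Generalized Chebyshev evaluation: `cheb n t = P_n(t 0, ..., t (n-1))`,
where `P_0 = 1`, `P_1(t_0) = t_0`, and
`P_{n+1}(t_0,...,t_n) = t_n * P_n(t_0,...,t_{n-1}) - P_{n-1}(t_0,...,t_{n-2})`. -/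
def cheb {R : Type*} [CommRing R] : ℕ → (ℕ → R) → R
  | 0, _ => 1
  | 1, t => t 0
  | (n + 2), t => t (n + 1) * cheb (n + 1) t - cheb n t

section Continuant

variable {R : Type*} [CommRing R]

theorem cheb_zero (t : ℕ → R) : cheb 0 t = 1 := rfl

theorem cheb_one (t : ℕ → R) : cheb 1 t = t 0 := rfl

theorem cheb_add_two (ℓ : ℕ) (t : ℕ → R) :
    cheb (ℓ + 2) t = t (ℓ + 1) * cheb (ℓ + 1) t - cheb ℓ t := rfl

theorem cheb_casoratian (t : ℕ → R) (j r : ℕ) :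
    cheb (r + 1) (fun k => t (j + 1 + k)) * cheb (j + 1 + r) t -
        cheb (j + r + 2) t * cheb r (fun k => t (j + 1 + k)) = cheb j t := by
  induction r with
  | zero =>
    simp only [zero_add, add_zero, cheb_zero, cheb_one, cheb_add_two]
    ring
  | succ r ih =>
    rw [show j + 1 + r = j + r + 1 by omega, show j + r + 2 = j + r + 1 + 1 by omega] at ih
    rw [cheb_add_two, show j + (r + 1) + 2 = j + r + 1 + 2 by omega, cheb_add_two,
      show j + 1 + (r + 1) = j + r + 1 + 1 by omega]
    linear_combination ih

theorem cheb_shift_mul_cheb (t : ℕ → R) (j r s : ℕ) :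
    cheb (r + 1 + s) (fun k => t (j + 1 + k)) * cheb (j + 1 + r) t =
      cheb (j + r + 2 + s) t * cheb r (fun k => t (j + 1 + k)) +
        cheb j t * cheb s (fun k => t (j + r + 2 + k)) := by
  have base := cheb_casoratian t j r
  induction s using Nat.twoStepInduction with
  | zero =>
    rw [cheb_zero]
    linear_combination base
  | one =>
    rw [cheb_add_two, show j + r + 2 + 1 = j + r + 1 + 2 by omega, cheb_add_two, cheb_one]
    rw [show j + 1 + (r + 1) = j + r + 2 by omega, show j + r + 2 + 0 = j + r + 2 by omega,
      show j + r + 1 + 1 = j + r + 2 by omega, show j + 1 + r = j + r + 1 by omega]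
    rw [show j + 1 + r = j + r + 1 by omega] at base
    linear_combination t (j + r + 2) * base
  | more s ih₀ ih₁ =>
    rw [show r + 1 + (s + 2) = r + 1 + s + 2 by omega, cheb_add_two,
      show j + r + 2 + (s + 2) = j + r + 2 + s + 2 by omega, cheb_add_two, cheb_add_two,
      show j + 1 + (r + 1 + s + 1) = j + r + 2 + s + 1 by omega,
      show j + r + 2 + (s + 1) = j + r + 2 + s + 1 by omega]
    linear_combination t (j + r + 2 + s + 1) * ih₁ - ih₀

end Continuant

theorem cheb_multiplication_general (m n j : ℕ) (hj : 0 < j) (hjn : j < n)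
    (hmnj : m > n - j) :
    cheb m (fun k => (X (j + k) : MvPolynomial ℕ ℤ)) *
        cheb n (fun k => (X k : MvPolynomial ℕ ℤ)) =
      cheb (m + j) (fun k => (X k : MvPolynomial ℕ ℤ)) *
          cheb (n - j) (fun k => (X (j + k) : MvPolynomial ℕ ℤ)) +
        cheb (j - 1) (fun k => (X k : MvPolynomial ℕ ℤ)) *
          cheb (m + j - n - 1) (fun k => (X (n + 1 + k) : MvPolynomial ℕ ℤ)) := by
  obtain ⟨j, rfl⟩ : ∃ i, j = i + 1 := ⟨j - 1, by omega⟩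
  obtain ⟨r, rfl⟩ : ∃ r, n = j + 1 + r := ⟨n - (j + 1), by omega⟩
  obtain ⟨s, rfl⟩ : ∃ s, m = r + 1 + s := ⟨m - (r + 1), by omega⟩
  rw [show r + 1 + s + (j + 1) - (j + 1 + r) - 1 = s by omega,
    show r + 1 + s + (j + 1) = j + r + 2 + s by omega, show j + 1 + r - (j + 1) = r by omega,
    show j + 1 - 1 = j by omega, show j + 1 + r + 1 = j + r + 2 by omega]
  exact cheb_shift_mul_cheb (fun k => X k) j r s

/-- multiplication identity for generalized Chebyshev polynomials
(polynomial form of the multiplication theorem in wild regular components). -/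
theorem cheb_multiplication (m n j : ℕ) (hm : 0 < m) (hj : 0 < j) (hjn : j < n)
    (hmnj : m > n - j) :
    cheb m (fun k => (X (j + k) : MvPolynomial ℕ ℤ)) *
        cheb n (fun k => (X k : MvPolynomial ℕ ℤ)) =
      cheb (m + j) (fun k => (X k : MvPolynomial ℕ ℤ)) *
          cheb (n - j) (fun k => (X (j + k) : MvPolynomial ℕ ℤ)) +
        cheb (j - 1) (fun k => (X k : MvPolynomial ℕ ℤ)) *
          cheb (m + j - n - 1) (fun k => (X (n + 1 + k) : MvPolynomial ℕ ℤ)) :=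
  cheb_multiplication_general m n j hj hjn hmnj
end

section
/- Let r ≥ 1 and let u_0, ..., u_{r-1} be indeterminates with u_{-1} = u_r = 1 and x_i = (u_{i-1} + u_{i+1})/u_i for 0 ≤ i ≤ r−1. Then for every 0 ≤ i ≤ r−1, u_i ∈ ℚ(x_0, ..., x_{r-1}); explicitly, u_{r-1} = (P_{r-1}(x_0, ..., x_{r-2}) + 1)/P_r(x_0, ..., x_{r-1}). -/
open MvPolynomial Polynomial

/-- The field `ℚ(u_0, ..., u_{r-1})`. -/
abbrev FF (r : ℕ) := FractionRing (MvPolynomial (Fin r) ℚ)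

/-- The indeterminates `u_i` for `0 ≤ i < r`, extended by `u_i = 1` outside this range
(so that `u_{-1} = u_r = 1`). -/
noncomputable def uu (r : ℕ) (i : ℤ) : FF r :=
  if h : 0 ≤ i ∧ i < r then
    algebraMap (MvPolynomial (Fin r) ℚ) (FF r) (X (⟨i.toNat, by omega⟩ : Fin r))
  else 1

/-- The cluster characters of the simple modules: `x_i = (u_{i-1} + u_{i+1}) / u_i`. -/
noncomputable def xx (r : ℕ) (i : ℤ) : FF r := (uu r (i - 1) + uu r (i + 1)) / uu r i

/-!
Multiplying out the recurrences, `P_{n+1}(x) u_n - P_n(x) u_{n+1} = 1` for all `n`, and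
`P_n(x) u_0 ⋯ u_{n-1}` is a polynomial in the `u_i` that specialises to `n + 1` at `u = 1`, so
`P_n(x) ≠ 0`. Hence `u_n = (1 + P_n(x) u_{n+1}) / P_{n+1}(x)`, and descending from `u_r = 1`
puts every `u_i` in `ℚ(x_0, ..., x_{r-1})`; the case `n = r - 1` is the explicit formula.
-/

section cheb

variable {R : Type*} [CommRing R]

lemma cheb_mem {S : Type*} [SetLike S R] [SubringClass S R] {s : S} {t : ℕ → R}
    (n : ℕ) (ht : ∀ i < n, t i ∈ s) : cheb n t ∈ s := by
  induction n using Nat.twoStepInduction with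
  | zero => exact one_mem s
  | one => exact ht 0 one_pos
  | more n ih₀ ih₁ =>
    exact sub_mem (mul_mem (ht _ (by omega)) (ih₁ fun i hi => ht i (by omega)))
      (ih₀ fun i hi => ht i (by omega))

lemma cheb_wronskian {t : ℕ → R} {u : ℤ → R} (htu : ∀ i : ℕ, t i * u i = u (i - 1) + u (i + 1))
    (hu : u (-1) = 1) (n : ℕ) : cheb (n + 1) t * u n - cheb n t * u (n + 1) = 1 := by
  induction n with
  | zero => simpa [cheb, hu, sub_eq_iff_eq_add, add_comm] using htu 0
  | succ n ih =>
    have h := htu (n + 1)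
    push_cast at h ih ⊢
    simp only [add_sub_cancel_right] at h
    rw [cheb]
    linear_combination cheb (n + 1) t * h + ih

/-- The numerator of `cheb n t` over `u_0 ⋯ u_{n-1}` when `t_i = (u_{i-1} + u_{i+1}) / u_i`
(`cheb_mul_prod`). -/
def chebNum (u : ℤ → R) : ℕ → R
  | 0 => 1
  | 1 => u (-1) + u 1
  | n + 2 => (u n + u (n + 2)) * chebNum u (n + 1) - u n * u (n + 1) * chebNum u n

lemma cheb_mul_prod {t : ℕ → R} {u : ℤ → R} (htu : ∀ i : ℕ, t i * u i = u (i - 1) + u (i + 1))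
    (n : ℕ) : cheb n t * ∏ i ∈ Finset.range n, u i = chebNum u n := by
  induction n using Nat.twoStepInduction with
  | zero => simp [cheb, chebNum]
  | one => simpa [cheb, chebNum] using htu 0
  | more n ih₀ ih₁ =>
    have h := htu (n + 1)
    rw [cheb, chebNum, ← ih₀, ← ih₁, Finset.prod_range_succ, Finset.prod_range_succ]
    push_cast at h ⊢
    simp only [add_sub_cancel_right, add_assoc, one_add_one_eq_two] at h
    linear_combination cheb (n + 1) t * (∏ i ∈ Finset.range n, u i) * u n * h

lemma map_chebNum {S : Type*} [CommRing S] (f : R →+* S) (u : ℤ → R) (n : ℕ) :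
    f (chebNum u n) = chebNum (f ∘ u) n := by
  induction n using Nat.twoStepInduction with
  | zero => simp [chebNum]
  | one => simp [chebNum]
  | more n ih₀ ih₁ => simp [chebNum, ih₀, ih₁]

lemma chebNum_one (n : ℕ) : chebNum (fun _ => (1 : R)) n = n + 1 := by
  induction n using Nat.twoStepInduction with
  | zero => simp [chebNum]
  | one => norm_num [chebNum]
  | more n ih₀ ih₁ => rw [chebNum, ih₀, ih₁]; push_cast; ring

end cheb

lemma uu_ne_zero (r : ℕ) (i : ℤ) : uu r i ≠ 0 := by
  unfold uu
  split_ifs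
  · simp [MvPolynomial.X_ne_zero]
  · exact one_ne_zero

lemma uu_eq_one (r : ℕ) {i : ℤ} (h : i < 0 ∨ (r : ℤ) ≤ i) : uu r i = 1 :=
  dif_neg (by omega)

lemma xx_mul_uu (r : ℕ) (i : ℤ) : xx r i * uu r i = uu r (i - 1) + uu r (i + 1) :=
  div_mul_cancel₀ _ (uu_ne_zero r i)

noncomputable def uuPoly (r : ℕ) (i : ℤ) : MvPolynomial (Fin r) ℚ :=
  if h : 0 ≤ i ∧ i < r then X (⟨i.toNat, by omega⟩ : Fin r) else 1

lemma algebraMap_uuPoly (r : ℕ) :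
    algebraMap (MvPolynomial (Fin r) ℚ) (FF r) ∘ uuPoly r = uu r := by
  ext i
  simp only [Function.comp_apply, uuPoly, uu]
  split_ifs <;> simp

lemma eval_one_uuPoly (r : ℕ) : MvPolynomial.eval (fun _ => (1 : ℚ)) ∘ uuPoly r = fun _ => 1 := by
  ext i
  simp only [Function.comp_apply, uuPoly]
  split_ifs <;> simp

lemma cheb_xx_ne_zero (r n : ℕ) : cheb n (fun k => xx r k) ≠ 0 := by
  have hnum : chebNum (uu r) n ≠ 0 := by
    rw [← algebraMap_uuPoly, ← map_chebNum, ne_eq,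
      IsFractionRing.to_map_eq_zero_iff (K := FF r)]
    intro h
    have := map_chebNum (MvPolynomial.eval fun _ => (1 : ℚ)) (uuPoly r) n
    rw [h, eval_one_uuPoly, chebNum_one, map_zero] at this
    exact (Nat.cast_add_one_ne_zero n) this.symm
  rw [← cheb_mul_prod (fun i => xx_mul_uu r i) n] at hnum
  exact left_ne_zero_of_mul hnum

lemma uu_eq_div (r n : ℕ) :
    uu r n = (1 + cheb n (fun k => xx r k) * uu r (n + 1)) / cheb (n + 1) (fun k => xx r k) := by
  rw [eq_div_iff (cheb_xx_ne_zero r (n + 1))]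
  linear_combination
    cheb_wronskian (fun i => xx_mul_uu r i) (uu_eq_one r (by omega)) n

lemma uu_mem_adjoin_xx_of_le (r : ℕ) {n : ℕ} (hn : n ≤ r) :
    uu r n ∈ IntermediateField.adjoin ℚ (Set.range fun j : Fin r => xx r j) := by
  have cheb_mem_adjoin (m : ℕ) (hm : m ≤ r) :
      cheb m (fun k => xx r k) ∈ IntermediateField.adjoin ℚ (Set.range fun j : Fin r => xx r j) :=
    cheb_mem m fun i hi => IntermediateField.subset_adjoin ℚ _ ⟨⟨i, by omega⟩, rfl⟩
  induction hn using Nat.decreasingInduction with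
  | self => rw [uu_eq_one r (by omega)]; exact one_mem _
  | of_succ n hn ih =>
    rw [uu_eq_div]
    push_cast at ih
    exact div_mem (add_mem (one_mem _) (mul_mem (cheb_mem_adjoin n hn.le) ih))
      (cheb_mem_adjoin (n + 1) hn)

/-- each `u_i` lies in the subfield `ℚ(x_0, ..., x_{r-1})`, and explicitly
`u_{r-1} = (P_{r-1}(x_0, ..., x_{r-2}) + 1) / P_r(x_0, ..., x_{r-1})`. -/
theorem uu_mem_adjoin_xx (r : ℕ) (hr : 1 ≤ r) :
    (∀ i : Fin r, uu r i ∈ IntermediateField.adjoin ℚ (Set.range fun j : Fin r => xx r j)) ∧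
      uu r ((r : ℤ) - 1) =
        (cheb (r - 1) (fun k => xx r k) + 1) / cheb r (fun k => xx r k) := by
  refine ⟨fun i => uu_mem_adjoin_xx_of_le r i.isLt.le, ?_⟩
  obtain ⟨n, rfl⟩ : ∃ n, r = n + 1 := ⟨r - 1, by omega⟩
  have h := uu_eq_div (n + 1) n
  rw [uu_eq_one (n + 1) (i := n + 1) (by omega), mul_one, add_comm (1 : FF _)] at h
  rwa [Nat.add_sub_cancel, Nat.cast_add_one, add_sub_cancel_right]
end
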